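/- For graphs G and H without isolated vertices, γ_tR(G × H) = 4 if and only if both G and H are isomorphic to K_2. -/

import Mathlib

open Finset

/-- A total Roman dominating function: labels in {0,1,2}, every 0-labeled vertex has a
2-labeled neighbor, and positive-labeled vertices induce a subgraph with no isolated vertex. -/
def IsTRDF {V : Type*} (G : SimpleGraph V) (f : V → ℕ) : Prop :=
  (∀ v, f v ≤ 2) ∧
  (∀ v, f v = 0 → ∃ u, G.Adj v u ∧ f u = 2) ∧
  (∀ v, 0 < f v → ∃ u, G.Adj v u ∧ 0 < f u)

/-- The total Roman domination number. -/
noncomputable def trdn {V : Type*} (G : SimpleGraph V) [Fintype V] : ℕ :=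
  sInf {w | ∃ f : V → ℕ, IsTRDF G f ∧ ∑ v, f v = w}

/-- A total dominating set. -/
def IsTotalDomSet {V : Type*} (G : SimpleGraph V) (D : Set V) : Prop :=
  ∀ v, ∃ u ∈ D, G.Adj v u

/-- The total domination number. -/
noncomputable def tdn {V : Type*} (G : SimpleGraph V) [Fintype V] : ℕ :=
  sInf {n | ∃ D : Finset V, IsTotalDomSet G ↑D ∧ D.card = n}

/-- A packing: pairwise disjoint closed neighborhoods. -/
def IsPacking {V : Type*} (G : SimpleGraph V) (S : Set V) : Prop :=
  ∀ u ∈ S, ∀ v ∈ S, u ≠ v →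
    Disjoint (insert u (G.neighborSet u)) (insert v (G.neighborSet v))

/-- The packing number. -/
noncomputable def packingNumber {V : Type*} (G : SimpleGraph V) [Fintype V] : ℕ :=
  sSup {n | ∃ S : Finset V, IsPacking G ↑S ∧ S.card = n}

/-- An open packing: pairwise disjoint open neighborhoods. -/
def IsOpenPacking {V : Type*} (G : SimpleGraph V) (S : Set V) : Prop :=
  ∀ u ∈ S, ∀ v ∈ S, u ≠ v → Disjoint (G.neighborSet u) (G.neighborSet v)

/-- The open packing number. -/
noncomputable def openPackingNumber {V : Type*} (G : SimpleGraph V) [Fintype V] : ℕ :=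
  sSup {n | ∃ S : Finset V, IsOpenPacking G ↑S ∧ S.card = n}

/-- The direct (tensor) product of two simple graphs. -/
def dirProd {V W : Type*} (G : SimpleGraph V) (H : SimpleGraph W) : SimpleGraph (V × W) where
  Adj p q := G.Adj p.1 q.1 ∧ H.Adj p.2 q.2
  symm := ⟨fun p q h => ⟨h.1.symm, h.2.symm⟩⟩
  loopless := ⟨fun p h => G.irrefl h.1⟩

/-- A graph with no isolated vertices. -/
def NoIsolated {V : Type*} (G : SimpleGraph V) : Prop := ∀ v, ∃ u, G.Adj v u

/-!
Since G × H has no isolated vertex, labelling every vertex 1 is a total Roman dominating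
function, so γ_tR(G × H) ≤ |V(G)||V(H)|. A 2-labelled vertex x = (a, b) forces weight at
least 5: its positive neighbour u = (c, d) has a ≠ c and b ≠ d, and the vertices (a, d) and
(c, b) are adjacent to neither x nor u, so each of them either carries weight itself or has a
2-labelled neighbour outside {x, u}. Hence a function of weight 4 labels everything 1 and
|V(G)||V(H)| = 4, which with no isolated vertices means both factors have two vertices.
Conversely, in K₂ × K₂ = 2K₂ a 0-labelled vertex would need a 2-labelled neighbour whose only
neighbour is the 0-labelled one, so every vertex is labelled at least 1.
-/

namespace NoIsolated

variable {V W : Type*} {G : SimpleGraph V} {H : SimpleGraph W}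

lemma dirProd (hG : NoIsolated G) (hH : NoIsolated H) : NoIsolated (dirProd G H) := fun x => by
  obtain ⟨a, ha⟩ := hG x.1
  obtain ⟨b, hb⟩ := hH x.2
  exact ⟨(a, b), ha, hb⟩

lemma isTRDF_one (hG : NoIsolated G) : IsTRDF G 1 :=
  ⟨fun _ => by simp, fun _ h => absurd h one_ne_zero,
    fun v _ => (hG v).imp fun _ h => ⟨h, one_pos⟩⟩

lemma card_ne_one [Fintype V] (hG : NoIsolated G) : Fintype.card V ≠ 1 := fun h => by
  obtain ⟨x, hx⟩ := Fintype.card_eq_one_iff.mp h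
  obtain ⟨u, hu⟩ := hG x
  exact G.ne_of_adj hu (hx u).symm

end NoIsolated

lemma eq_of_ne_of_ne_of_card_eq_two {V : Type*} [Fintype V] (h : Fintype.card V = 2)
    {u v w : V} (hv : v ≠ u) (hw : w ≠ u) : v = w :=
  ((Nat.card_eq_two_iff' u).mp (Nat.card_eq_fintype_card.trans h)).unique hv hw

lemma SimpleGraph.adj_unique_of_card_eq_two {V : Type*} [Fintype V] (G : SimpleGraph V)
    (h : Fintype.card V = 2) : ∀ ⦃u v w⦄, G.Adj u v → G.Adj u w → v = w :=
  fun _ _ _ huv huw => eq_of_ne_of_ne_of_card_eq_two h (G.ne_of_adj huv).symm (G.ne_of_adj huw).symm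

lemma nonempty_iso_top_fin_two_iff {V : Type*} [Fintype V] {G : SimpleGraph V}
    (hG : NoIsolated G) : Nonempty (G ≃g (⊤ : SimpleGraph (Fin 2))) ↔ Fintype.card V = 2 := by
  refine ⟨fun ⟨e⟩ => by simpa using Fintype.card_congr e.toEquiv, fun h => ?_⟩
  have hG_top : G = ⊤ := by
    ext a b
    refine ⟨G.ne_of_adj, fun hab => ?_⟩
    obtain ⟨c, hc⟩ := hG a
    rwa [← eq_of_ne_of_ne_of_card_eq_two h (G.ne_of_adj hc).symm (Ne.symm hab)]
  exact hG_top ▸ ⟨SimpleGraph.Iso.completeGraph (Fintype.equivFinOfCardEq h)⟩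

lemma Nat.eq_two_of_mul_eq_four {a b : ℕ} (ha : a ≠ 1) (hb : b ≠ 1) (h : a * b = 4) :
    a = 2 ∧ b = 2 := by
  have : a ≤ 4 := Nat.le_of_dvd (by norm_num) ⟨b, h.symm⟩
  interval_cases a <;> omega

section TRDF

variable {V : Type*} {G : SimpleGraph V} {f : V → ℕ}

lemma IsTRDF.eq_one_of_le_one (hf : IsTRDF G f) (hle : ∀ v, f v ≤ 1) (v : V) : f v = 1 := by
  obtain h | h := Nat.eq_zero_or_pos (f v)
  · obtain ⟨u, -, hu⟩ := hf.2.1 v h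
    exact absurd (hle u) (by omega)
  · exact le_antisymm (hle v) h

lemma IsTRDF.pos_of_adj_unique (hf : IsTRDF G f)
    (huniq : ∀ ⦃u v w⦄, G.Adj u v → G.Adj u w → v = w) (v : V) : 0 < f v := by
  by_contra! h
  obtain ⟨u, hvu, hu⟩ := hf.2.1 v (Nat.le_zero.mp h)
  obtain ⟨w, huw, hw⟩ := hf.2.2 u (by omega)
  rw [huniq huw hvu.symm] at hw
  omega

variable [Fintype V]

lemma trdn_le (hf : IsTRDF G f) : trdn G ≤ ∑ v, f v :=
  Nat.sInf_le ⟨f, hf, rfl⟩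

lemma NoIsolated.exists_isTRDF_sum_eq_trdn (hG : NoIsolated G) :
    ∃ f, IsTRDF G f ∧ ∑ v, f v = trdn G :=
  Nat.sInf_mem (s := {w | ∃ f, IsTRDF G f ∧ ∑ v, f v = w}) ⟨_, 1, hG.isTRDF_one, rfl⟩

lemma NoIsolated.le_trdn (hG : NoIsolated G) {n : ℕ}
    (h : ∀ f, IsTRDF G f → n ≤ ∑ v, f v) : n ≤ trdn G := by
  obtain ⟨f, hf, hsum⟩ := hG.exists_isTRDF_sum_eq_trdn
  exact hsum ▸ h f hf

lemma IsTRDF.card_le_sum_of_adj_unique (hf : IsTRDF G f)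
    (huniq : ∀ ⦃u v w⦄, G.Adj u v → G.Adj u w → v = w) :
    Fintype.card V ≤ ∑ v, f v :=
  calc Fintype.card V = ∑ _v : V, 1 := by simp
    _ ≤ ∑ v, f v := Finset.sum_le_sum fun v _ => hf.pos_of_adj_unique huniq v

lemma IsTRDF.five_le_sum_of_eq_two (hf : IsTRDF G f) {x u w : V} (hxu : x ≠ u) (hx : f x = 2)
    (hu : 0 < f u) (hw : f w = 0) (hwx : ¬G.Adj w x) (hwu : ¬G.Adj w u) :
    5 ≤ ∑ v, f v := by
  classical
  obtain ⟨z, hwz, hz⟩ := hf.2.1 w hw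
  have hxz : x ≠ z := by rintro rfl; exact hwx hwz
  have huz : u ≠ z := by rintro rfl; exact hwu hwz
  have := Finset.sum_le_sum_of_subset (f := f) (Finset.subset_univ {x, u, z})
  rw [Finset.sum_insert (by simp [hxu, hxz]), Finset.sum_pair huz] at this
  omega

end TRDF

section DirProd

variable {V W : Type*} {G : SimpleGraph V} {H : SimpleGraph W}

lemma dirProd_adj_unique (hG : ∀ ⦃u v w⦄, G.Adj u v → G.Adj u w → v = w)
    (hH : ∀ ⦃u v w⦄, H.Adj u v → H.Adj u w → v = w) :
    ∀ ⦃u v w⦄, (dirProd G H).Adj u v → (dirProd G H).Adj u w → v = w :=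
  fun _ _ _ huv huw => Prod.ext (hG huv.1 huw.1) (hH huv.2 huw.2)

variable [Fintype V] [Fintype W] {f : V × W → ℕ}

lemma IsTRDF.le_one_of_sum_lt_five (hf : IsTRDF (dirProd G H) f) (hsum : ∑ v, f v < 5)
    (x : V × W) : f x ≤ 1 := by
  classical
  by_contra! hx
  replace hx : f x = 2 := le_antisymm (hf.1 x) hx
  obtain ⟨⟨c, d⟩, ⟨hac, hbd⟩, hu⟩ := hf.2.2 x (by omega)
  obtain ⟨a, b⟩ := x
  have hac' : a ≠ c := G.ne_of_adj hac
  have hbd' : b ≠ d := H.ne_of_adj hbd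
  have hxu : (a, b) ≠ (c, d) := by simp [hac']
  obtain hp | hp := Nat.eq_zero_or_pos (f (a, d))
  · have := hf.five_le_sum_of_eq_two hxu hx hu hp (fun h => G.irrefl h.1) (fun h => H.irrefl h.2)
    omega
  obtain hq | hq := Nat.eq_zero_or_pos (f (c, b))
  · have := hf.five_le_sum_of_eq_two hxu hx hu hq (fun h => H.irrefl h.2) (fun h => G.irrefl h.1)
    omega
  have := Finset.sum_le_sum_of_subset (f := f)
    (Finset.subset_univ {(a, b), (c, d), (a, d), (c, b)})
  rw [Finset.sum_insert (by simp [hac', hbd']), Finset.sum_insert (by simp [hac'.symm, hbd'.symm]),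
    Finset.sum_pair (by simp [hac'])] at this
  omega

end DirProd

theorem stmt_13 {V W : Type*} [Fintype V] [Fintype W]
    (G : SimpleGraph V) (H : SimpleGraph W)
    (hG : NoIsolated G) (hH : NoIsolated H) :
    trdn (dirProd G H) = 4 ↔
      (Nonempty (G ≃g (⊤ : SimpleGraph (Fin 2))) ∧
        Nonempty (H ≃g (⊤ : SimpleGraph (Fin 2)))) := by
  have hGH := hG.dirProd hH
  rw [nonempty_iso_top_fin_two_iff hG, nonempty_iso_top_fin_two_iff hH]
  constructor
  · intro h
    obtain ⟨f, hf, hsum⟩ := hGH.exists_isTRDF_sum_eq_trdn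
    have hone := hf.eq_one_of_le_one (hf.le_one_of_sum_lt_five (by omega))
    have hcard : Fintype.card V * Fintype.card W = 4 := by
      simpa [hone, h] using hsum
    exact Nat.eq_two_of_mul_eq_four hG.card_ne_one hH.card_ne_one hcard
  · rintro ⟨hV, hW⟩
    refine le_antisymm (by simpa [hV, hW] using trdn_le hGH.isTRDF_one) (hGH.le_trdn fun f hf => ?_)
    simpa [hV, hW] using hf.card_le_sum_of_adj_unique
      (dirProd_adj_unique (G.adj_unique_of_card_eq_two hV) (H.adj_unique_of_card_eq_two hW))
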